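/- Under the physical-intensity assumption, the expected negative log-likelihood f(z) = −E[Σ_{t=1}^{N} (−(1−y_t)·h·Λ_t(z;y) + y_t·log(1 − e^{−h·Λ_t(z;y)}))] is κ'-strongly convex on Θ_K, where κ' = e^{−2·h·b}·(b/B)²·h²·e^{−B·τ_max}; that is, for all z, z̃ ∈ Θ_K and all λ ∈ [0,1], f(λ·z + (1−λ)·z̃) ≤ λ·f(z) + (1−λ)·f(z̃) − (κ'/2)·λ·(1−λ)·‖z − z̃‖₂². -/

import Mathlib

open Finset
open scoped BigOperators RealInnerProductSpace

noncomputable section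

/-- Real value of a Boolean: `1` if `true`, `0` if `false`. -/
def bval (b : Bool) : ℝ := if b then 1 else 0

/-- The time window of indices `-N'+1, …, N`. -/
def window (N N' : ℕ) : Finset ℤ := Finset.Icc (-(N' : ℤ) + 1) (N : ℤ)

/-- The probability mass function of the discrete-time Bernoulli process with
true conditional intensities `Λ`. -/
def seqPMF (N N' : ℕ) (h : ℝ) (Λ : ℤ → (ℤ → Bool) → ℝ) (y : ℤ → Bool) : ℝ :=
  ∏ t ∈ window N N',
    ((1 - bval (y t)) * Real.exp (-(h * Λ t y))
      + bval (y t) * (1 - Real.exp (-(h * Λ t y))))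

/-- Extension of a window-indexed binary sequence to all of `ℤ` (by `false`). -/
def extSeq (N N' : ℕ) (w : ↥(window N N') → Bool) : ℤ → Bool :=
  fun i => if hi : i ∈ window N N' then w ⟨i, hi⟩ else false

/-- Expectation with respect to the law of the process. -/
def expect (N N' : ℕ) (h : ℝ) (Λ : ℤ → (ℤ → Bool) → ℝ) (f : (ℤ → Bool) → ℝ) : ℝ :=
  ∑ w : ↥(window N N') → Bool, seqPMF N N' h Λ (extSeq N N' w) * f (extSeq N N' w)

/-- The index set of the kernel parameter: pairs `(i, t)` with `1 ≤ t ≤ N` and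
`t - N' ≤ i ≤ t - 1`. -/
def kIdx (N N' : ℕ) : Finset (ℤ × ℤ) :=
  (Finset.Icc (-(N' : ℤ) + 1) (N : ℤ) ×ˢ Finset.Icc 1 (N : ℤ)).filter
    (fun p => p.2 - (N' : ℤ) ≤ p.1 ∧ p.1 ≤ p.2 - 1)

/-- The space `ℝ^{N·N'}` of kernel parameters, with Euclidean structure. -/
abbrev Param (N N' : ℕ) := EuclideanSpace ℝ ↥(kIdx N N')

/-- Entry `z_{i,t}` of a kernel parameter (zero outside the index set). -/
def zent (N N' : ℕ) (z : Param N N') (i t : ℤ) : ℝ :=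
  if hm : (i, t) ∈ kIdx N N' then z ⟨(i, t), hm⟩ else 0

/-- The model intensity `Λ_t(z; y) = μ + ∑_{i = t-N'}^{t-1} y_i z_{i,t}`. -/
def modelIntensity (N N' : ℕ) (μ : ℝ) (z : Param N N') (t : ℤ) (y : ℤ → Bool) : ℝ :=
  μ + ∑ i ∈ Finset.Icc (t - (N' : ℤ)) (t - 1), bval (y i) * zent N N' z i t

/-- The history vector `η_t(y)`: entry `y_i` at index `(i, t)`, zero elsewhere. -/
def eta (N N' : ℕ) (t : ℤ) (y : ℤ → Bool) : Param N N' :=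
  WithLp.toLp 2 (fun p : ↥(kIdx N N') => if p.1.2 = t then bval (y p.1.1) else 0)

/-- The link function `φ(x) = 1 - e^{-x}`. -/
def phi (x : ℝ) : ℝ := 1 - Real.exp (-x)

/-- The per-trajectory VI vector field
`Ĝ(z; y) = ∑_{t=1}^N (φ(h Λ_t(z;y)) - y_t) η_t(y)`. -/
def Ghat (N N' : ℕ) (h μ : ℝ) (z : Param N N') (y : ℤ → Bool) : Param N N' :=
  ∑ t ∈ Finset.Icc (1 : ℤ) (N : ℤ),
    (phi (h * modelIntensity N N' μ z t y) - bval (y t)) • eta N N' t y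

/-- Expectation of a vector-valued statistic with respect to the law of the process. -/
def expectVec {E : Type*} [AddCommMonoid E] [Module ℝ E]
    (N N' : ℕ) (h : ℝ) (Λ : ℤ → (ℤ → Bool) → ℝ) (f : (ℤ → Bool) → E) : E :=
  ∑ w : ↥(window N N') → Bool, seqPMF N N' h Λ (extSeq N N' w) • f (extSeq N N' w)

/-- The expected negative log-likelihood
`f(z) = -E[ ∑_{t=1}^N ( -(1-y_t) h Λ_t(z;y) + y_t log(1 - e^{-h Λ_t(z;y)}) ) ]`. -/
def negLogLik (N N' : ℕ) (h : ℝ) (Λ : ℤ → (ℤ → Bool) → ℝ) (μ : ℝ)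
    (z : Param N N') : ℝ :=
  - expect N N' h Λ (fun y =>
      ∑ t ∈ Finset.Icc (1 : ℤ) (N : ℤ),
        (-(1 - bval (y t)) * (h * modelIntensity N N' μ z t y)
          + bval (y t) * Real.log (1 - Real.exp (-(h * modelIntensity N N' μ z t y)))))

/-!
Fix a trajectory `y`. Its log-likelihood is a sum over `t` of `-x_t` (no event) or
`log (1 - e^{-x_t})` (event), where `x_t = h Λ_t(z; y)` is affine in `z` and stays in
`[h b, h B]` on `Θ_K`. The first kind of term is affine; the second is strongly concave with
modulus `e^{-hB} / (hB)²`, because `(log (1 - e^{-x}))'' = -e^{-x} / (1 - e^{-x})²` and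
`1 - e^{-x} ≤ x`. Hence at `a z + (1 - a) z'` the negative log-likelihood gains `a (1 - a) / 2`
times the quadratic form `(e^{-hB} / B²) ∑_t y_t ⟨η_t(y), z - z'⟩²`.

To bound the expectation of this form below by a multiple of `‖z - z'‖²`, restrict, for each
coefficient `(i, t)`, to the event that among the times `t - N', …, t` events happen exactly at
`i` and `t`; there the `t`-th term of the form is `(z - z')_{i,t}²`. Whatever the past, an
event has conditional probability at least `1 - e^{-hb}` and no event at least `e^{-hB}`, so by
the chain rule this event has probability at least `(1 - e^{-hb})² e^{-hB (N' - 1)}`. Finally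
`hb e^{-hb} ≤ 1 - e^{-hb}` shows that `κ'` is at most the product of the two constants.
-/

open Real

theorem one_sub_exp_neg_pos {x : ℝ} (hx : 0 < x) : 0 < 1 - exp (-x) :=
  sub_pos.mpr (exp_lt_one_iff.mpr (neg_lt_zero.mpr hx))

theorem hasDerivAt_one_sub_exp_neg (x : ℝ) :
    HasDerivAt (fun x => 1 - exp (-x)) (exp (-x)) x := by
  simpa using ((hasDerivAt_neg x).exp).const_sub 1

theorem strongConcaveOn_log_one_sub_exp_neg {m M : ℝ} (hm : 0 < m) :
    StrongConcaveOn (Set.Icc m M) (exp (-M) / M ^ 2) (fun x => log (1 - exp (-x))) := by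
  set c := exp (-M) / M ^ 2
  have hpos : ∀ x ∈ interior (Set.Icc m M), 0 < x := by
    rw [interior_Icc]
    exact fun x hx => hm.trans hx.1
  rw [strongConcaveOn_iff_convex]
  simp only [Real.norm_eq_abs, sq_abs]
  refine concaveOn_of_hasDerivWithinAt2_nonpos (convex_Icc m M)
    (f' := fun x => exp (-x) / (1 - exp (-x)) + c * x)
    (f'' := fun x => -(exp (-x) / (1 - exp (-x)) ^ 2) + c) ?_ ?_ ?_ ?_
  · refine ContinuousOn.add (ContinuousOn.log (by fun_prop) fun x hx => ?_) (by fun_prop)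
    exact (one_sub_exp_neg_pos (hm.trans_le hx.1)).ne'
  · intro x hx
    have hne := (one_sub_exp_neg_pos (hpos x hx)).ne'
    exact (((hasDerivAt_one_sub_exp_neg x).log hne).add
      ((hasDerivAt_pow 2 x).const_mul (c / 2))).congr_deriv (by norm_num; ring) |>.hasDerivWithinAt
  · intro x hx
    have hne := (one_sub_exp_neg_pos (hpos x hx)).ne'
    exact ((((hasDerivAt_neg x).exp).div (hasDerivAt_one_sub_exp_neg x) hne).add
      ((hasDerivAt_id x).const_mul c)).congr_deriv (by field_simp; ring) |>.hasDerivWithinAt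
  · intro x hx
    have hx0 := hpos x hx
    have hxM : x ≤ M := by
      rw [interior_Icc] at hx
      exact hx.2.le
    have hden : (1 - exp (-x)) ^ 2 ≤ M ^ 2 := by
      have := one_sub_le_exp_neg x
      gcongr
      · exact (one_sub_exp_neg_pos hx0).le
      · linarith
    have hnum : exp (-M) ≤ exp (-x) := exp_le_exp.mpr (by linarith)
    have : c ≤ exp (-x) / (1 - exp (-x)) ^ 2 :=
      div_le_div₀ (exp_pos _).le hnum (pow_pos (one_sub_exp_neg_pos hx0) 2) hden
    show _ ≤ _
    linarith

def bernoulliLogLik (β : Bool) (x : ℝ) : ℝ := -(1 - bval β) * x + bval β * log (1 - exp (-x))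

theorem strongConcaveOn_bernoulliLogLik (β : Bool) {m M : ℝ} (hm : 0 < m) :
    StrongConcaveOn (Set.Icc m M) (bval β * (exp (-M) / M ^ 2)) (bernoulliLogLik β) := by
  cases β
  · have hlin : bernoulliLogLik false = fun x => -x := by
      funext x
      simp [bernoulliLogLik, bval]
    simp only [hlin, bval, Bool.false_eq_true, if_false, zero_mul, strongConcaveOn_zero]
    exact (convexOn_id (𝕜 := ℝ) (convex_Icc m M)).neg
  · have hlog : bernoulliLogLik true = fun x => log (1 - exp (-x)) := by
      funext x
      simp [bernoulliLogLik, bval]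
    simpa only [hlog, bval, if_true, one_mul] using strongConcaveOn_log_one_sub_exp_neg hm

def bernoulliProb (β : Bool) (x : ℝ) : ℝ := (1 - bval β) * exp (-x) + bval β * (1 - exp (-x))

@[simp] theorem bernoulliProb_false (x : ℝ) : bernoulliProb false x = exp (-x) := by
  simp [bernoulliProb, bval]

@[simp] theorem bernoulliProb_true (x : ℝ) : bernoulliProb true x = 1 - exp (-x) := by
  simp [bernoulliProb, bval]

theorem bernoulliProb_pos (β : Bool) {x : ℝ} (hx : 0 < x) : 0 < bernoulliProb β x := by
  cases β
  · simpa using exp_pos (-x)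
  · simpa using one_sub_exp_neg_pos hx

theorem bernoulliProb_ge (β : Bool) {m M x : ℝ} (hmx : m ≤ x) (hxM : x ≤ M) :
    (if β then 1 - exp (-m) else exp (-M)) ≤ bernoulliProb β x := by
  cases β
  · simp only [Bool.false_eq_true, if_false, bernoulliProb_false]
    gcongr
  · simp only [if_true, bernoulliProb_true]
    gcongr

/-- Summing out the last coordinate first, each causal weight contributes a factor `≥ c t`. -/
theorem prod_le_sum_powerset_prod_of_causal {α : Type*} [LinearOrder α] (T : Finset α)
    {w : α → (α → Bool) → ℝ} {c : α → ℝ}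
    (hcausal : ∀ t ∈ T, ∀ y y' : α → Bool, (∀ i ≤ t, y i = y' i) → w t y = w t y')
    (hw : ∀ t ∈ T, ∀ y, 0 ≤ w t y) (hc0 : ∀ t ∈ T, 0 ≤ c t)
    (hc : ∀ t ∈ T, ∀ y,
      c t ≤ w t (Function.update y t false) + w t (Function.update y t true)) :
    ∏ t ∈ T, c t ≤ ∑ S ∈ T.powerset, ∏ t ∈ T, w t (fun i => decide (i ∈ S)) := by
  induction T using Finset.induction_on_max with
  | empty => simp
  | insert a s hlt ih =>
    have ha : a ∉ s := fun has => lt_irrefl a (hlt a has)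
    have hpast (S : Finset α) :
        ∏ t ∈ s, w t (fun i => decide (i ∈ insert a S))
          = ∏ t ∈ s, w t (fun i => decide (i ∈ S)) := by
      refine prod_congr rfl fun t ht => hcausal t (mem_insert_of_mem ht) _ _ fun i hi => ?_
      simp [(hi.trans_lt (hlt t ht)).ne]
    have hupdate (S : Finset α) (hS : S ∈ s.powerset) (β : Bool) :
        Function.update (fun i => decide (i ∈ S)) a β
          = fun i => decide (i ∈ (if β then insert a S else S)) := by
      have haS : a ∉ S := fun haS => ha (mem_powerset.mp hS haS)
      ext i
      by_cases hi : i = a <;> cases β <;> simp [hi, haS]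
    calc ∏ t ∈ insert a s, c t = c a * ∏ t ∈ s, c t := prod_insert ha
      _ ≤ c a * ∑ S ∈ s.powerset, ∏ t ∈ s, w t (fun i => decide (i ∈ S)) :=
        mul_le_mul_of_nonneg_left
          (ih (fun t ht => hcausal t (mem_insert_of_mem ht))
            (fun t ht => hw t (mem_insert_of_mem ht)) (fun t ht => hc0 t (mem_insert_of_mem ht))
            (fun t ht => hc t (mem_insert_of_mem ht)))
          (hc0 a (mem_insert_self a s))
      _ ≤ ∑ S ∈ s.powerset,
            (w a (fun i => decide (i ∈ S)) + w a (fun i => decide (i ∈ insert a S)))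
              * ∏ t ∈ s, w t (fun i => decide (i ∈ S)) := by
        rw [mul_sum]
        refine sum_le_sum fun S hS => mul_le_mul_of_nonneg_right ?_
          (prod_nonneg fun t ht => hw t (mem_insert_of_mem ht) _)
        simpa [hupdate S hS] using hc a (mem_insert_self a s) (fun i => decide (i ∈ S))
      _ = ∑ S ∈ (insert a s).powerset, ∏ t ∈ insert a s, w t (fun i => decide (i ∈ S)) := by
        rw [sum_powerset_insert ha, ← sum_add_distrib]
        refine sum_congr rfl fun S _ => ?_
        rw [prod_insert ha, prod_insert ha, hpast S]
        ring

def Predictable (N N' : ℕ) (Λ : ℤ → (ℤ → Bool) → ℝ) : Prop :=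
  ∀ (t : ℤ) (y y' : ℤ → Bool), (∀ i ∈ window N N', i < t → y i = y' i) → Λ t y = Λ t y'

section Intensity

variable {N N' : ℕ} {h : ℝ} {Λ : ℤ → (ℤ → Bool) → ℝ} {b B : ℝ}

theorem seqPMF_eq_prod_bernoulliProb (y : ℤ → Bool) :
    seqPMF N N' h Λ y = ∏ t ∈ window N N', bernoulliProb (y t) (h * Λ t y) := rfl

/-- The bounds are only assumed on histories of positive probability. Cutting `y` off at `t`
gives such a history as soon as the earlier intensities are positive. -/
theorem intensity_mem_Icc_of_past (hh : 0 < h) (hb : 0 < b) (hdep : Predictable N N' Λ)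
    (hstar : ∀ t ∈ window N N', ∀ y : ℤ → Bool,
      0 < seqPMF N N' h Λ y → b ≤ Λ t y ∧ Λ t y ≤ B)
    {t : ℤ} (ht : t ∈ window N N') (hpast : ∀ s ∈ window N N', s < t → ∀ y, b ≤ Λ s y)
    (y : ℤ → Bool) : b ≤ Λ t y ∧ Λ t y ≤ B := by
  set y' : ℤ → Bool := fun i => if i < t then y i else false
  have hy' : 0 < seqPMF N N' h Λ y' := by
    rw [seqPMF_eq_prod_bernoulliProb]
    refine prod_pos fun s hs => ?_
    by_cases hst : s < t
    · exact bernoulliProb_pos _ (mul_pos hh (hb.trans_le (hpast s hs hst y')))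
    · simp only [y', if_neg hst, bernoulliProb_false]
      exact exp_pos _
  rw [← hdep t y' y fun i _ hi => if_pos hi]
  exact hstar t ht y' hy'

theorem intensity_mem_Icc (hh : 0 < h) (hb : 0 < b) (hdep : Predictable N N' Λ)
    (hstar : ∀ t ∈ window N N', ∀ y : ℤ → Bool,
      0 < seqPMF N N' h Λ y → b ≤ Λ t y ∧ Λ t y ≤ B) :
    ∀ t ∈ window N N', ∀ y, b ≤ Λ t y ∧ Λ t y ≤ B := by
  intro t ht
  induction hn : (t + N').toNat using Nat.strong_induction_on generalizing t with
  | _ n ih =>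
    refine intensity_mem_Icc_of_past hh hb hdep hstar ht fun s hs hst y => ?_
    have hs' := (mem_Icc.mp hs).1
    exact (ih _ (by omega) s hs rfl y).1

theorem seqPMF_pos (hh : 0 < h) (hb : 0 < b)
    (hΛ : ∀ t ∈ window N N', ∀ y, b ≤ Λ t y ∧ Λ t y ≤ B) (y : ℤ → Bool) :
    0 < seqPMF N N' h Λ y :=
  prod_pos fun t ht => bernoulliProb_pos _ (mul_pos hh (hb.trans_le (hΛ t ht y).1))

end Intensity

section Expectation

variable {N N' : ℕ} {h : ℝ} {Λ : ℤ → (ℤ → Bool) → ℝ}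

theorem expect_eq_sum_powerset (f : (ℤ → Bool) → ℝ) :
    expect N N' h Λ f = ∑ S ∈ (window N N').powerset,
      seqPMF N N' h Λ (fun i => decide (i ∈ S)) * f (fun i => decide (i ∈ S)) := by
  have hext (w : ↥(window N N') → Bool) :
      extSeq N N' w = fun i => decide (i ∈ (window N N').filter (fun i => extSeq N N' w i)) := by
    ext i
    by_cases hi : i ∈ window N N' <;> simp [extSeq, hi]
  refine sum_nbij' (fun w => (window N N').filter (fun i => extSeq N N' w i))
    (fun S i => decide (i.1 ∈ S)) (fun w _ => by simp) (fun _ _ => mem_univ _)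
    (fun w _ => ?_) (fun S hS => ?_) (fun w _ => by rw [← hext])
  · ext i
    simp [extSeq]
  · ext i
    have := @mem_powerset.mp hS i
    by_cases hi : i ∈ window N N' <;> simp [extSeq, hi]
    tauto

theorem expect_mono (hp : ∀ y, 0 ≤ seqPMF N N' h Λ y) {f g : (ℤ → Bool) → ℝ}
    (hfg : ∀ y, f y ≤ g y) : expect N N' h Λ f ≤ expect N N' h Λ g :=
  sum_le_sum fun _ _ => mul_le_mul_of_nonneg_left (hfg _) (hp _)

theorem expect_add (f g : (ℤ → Bool) → ℝ) :
    expect N N' h Λ (fun y => f y + g y) = expect N N' h Λ f + expect N N' h Λ g := by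
  simp only [_root_.expect, mul_add, sum_add_distrib]

theorem expect_const_mul (c : ℝ) (f : (ℤ → Bool) → ℝ) :
    expect N N' h Λ (fun y => c * f y) = c * expect N N' h Λ f := by
  simp only [_root_.expect, mul_sum, mul_left_comm]

theorem expect_mul_const (f : (ℤ → Bool) → ℝ) (c : ℝ) :
    expect N N' h Λ (fun y => f y * c) = expect N N' h Λ f * c := by
  simp only [_root_.expect, sum_mul, mul_assoc]

theorem expect_sum {ι : Type*} (s : Finset ι) (f : ι → (ℤ → Bool) → ℝ) :
    expect N N' h Λ (fun y => ∑ i ∈ s, f i y) = ∑ i ∈ s, expect N N' h Λ (f i) := by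
  simp only [_root_.expect, mul_sum]
  exact sum_comm

end Expectation

def cylinderIndicator (S₀ : Finset ℤ) (σ : ℤ → Bool) (y : ℤ → Bool) : ℝ :=
  if ∀ u ∈ S₀, y u = σ u then 1 else 0

/-- Whatever the history, the outcome `σ u` at time `u` has conditional probability at least
`1 - e^{-hb}` (event) or `e^{-hB}` (no event), and these bounds multiply along the cylinder. -/
theorem prod_le_expect_cylinderIndicator {N N' : ℕ} {h b B : ℝ} {Λ : ℤ → (ℤ → Bool) → ℝ}
    (hh : 0 < h) (hb : 0 < b) (hdep : Predictable N N' Λ)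
    (hΛ : ∀ t ∈ window N N', ∀ y, b ≤ Λ t y ∧ Λ t y ≤ B)
    {S₀ : Finset ℤ} (hS₀ : S₀ ⊆ window N N') (σ : ℤ → Bool) :
    ∏ u ∈ S₀, (if σ u then 1 - exp (-(h * b)) else exp (-(h * B)))
      ≤ expect N N' h Λ (cylinderIndicator S₀ σ) := by
  set ind : ℤ → (ℤ → Bool) → ℝ := fun t y => if t ∈ S₀ then (if y t = σ t then 1 else 0) else 1
  set w : ℤ → (ℤ → Bool) → ℝ := fun t y => bernoulliProb (y t) (h * Λ t y) * ind t y
  have hcyl (y : ℤ → Bool) : cylinderIndicator S₀ σ y = ∏ t ∈ window N N', ind t y := by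
    rw [prod_ite_mem, inter_eq_right.mpr hS₀, prod_boole, cylinderIndicator]
  have hupdate (t : ℤ) (y : ℤ → Bool) (β : Bool) : Λ t (Function.update y t β) = Λ t y :=
    hdep t _ _ fun i _ hi => Function.update_of_ne hi.ne _ _
  calc ∏ u ∈ S₀, (if σ u then 1 - exp (-(h * b)) else exp (-(h * B)))
      = ∏ t ∈ window N N',
          if t ∈ S₀ then (if σ t then 1 - exp (-(h * b)) else exp (-(h * B))) else 1 := by
        rw [prod_ite_mem, inter_eq_right.mpr hS₀]
    _ ≤ ∑ S ∈ (window N N').powerset, ∏ t ∈ window N N', w t (fun i => decide (i ∈ S)) := by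
      refine prod_le_sum_powerset_prod_of_causal _ (fun t _ y y' hyy' => ?_) (fun t ht y => ?_)
        (fun t _ => ?_) (fun t ht y => ?_)
      · simp only [w, ind, hyy' t le_rfl, hdep t y y' fun i _ hi => hyy' i hi.le]
      · have hx : 0 < h * Λ t y := mul_pos hh (hb.trans_le (hΛ t ht y).1)
        exact mul_nonneg (bernoulliProb_pos _ hx).le (by simp only [ind]; split_ifs <;> norm_num)
      · have := (one_sub_exp_neg_pos (mul_pos hh hb)).le
        split_ifs <;> first | assumption | exact (exp_pos _).le | exact zero_le_one
      · have hx := hΛ t ht y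
        by_cases ht0 : t ∈ S₀
        · have hσ := bernoulliProb_ge (σ t) (mul_le_mul_of_nonneg_left hx.1 hh.le)
            (mul_le_mul_of_nonneg_left hx.2 hh.le)
          cases hσt : σ t <;> simpa [w, ind, ht0, hupdate, hσt] using hσ
        · simp [w, ind, ht0, hupdate]
    _ = expect N N' h Λ (cylinderIndicator S₀ σ) := by
      rw [expect_eq_sum_powerset]
      refine sum_congr rfl fun S _ => ?_
      rw [hcyl, seqPMF_eq_prod_bernoulliProb, ← prod_mul_distrib]

section Kernel

variable {N N' : ℕ}

/-- The paper's `⟨η_t(y), z⟩`, so that `Λ_t(z; y) = μ + excitation N N' z t y`. -/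
def excitation (N N' : ℕ) (z : Param N N') (t : ℤ) (y : ℤ → Bool) : ℝ :=
  ∑ i ∈ Icc (t - (N' : ℤ)) (t - 1), bval (y i) * zent N N' z i t

theorem zent_add (z z' : Param N N') (i t : ℤ) :
    zent N N' (z + z') i t = zent N N' z i t + zent N N' z' i t := by
  unfold zent
  split_ifs <;> simp

theorem zent_smul (c : ℝ) (z : Param N N') (i t : ℤ) :
    zent N N' (c • z) i t = c * zent N N' z i t := by
  unfold zent
  split_ifs <;> simp

theorem zent_sub (z z' : Param N N') (i t : ℤ) :
    zent N N' (z - z') i t = zent N N' z i t - zent N N' z' i t := by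
  unfold zent
  split_ifs <;> simp

theorem excitation_sub (z z' : Param N N') (t : ℤ) (y : ℤ → Bool) :
    excitation N N' (z - z') t y = excitation N N' z t y - excitation N N' z' t y := by
  simp only [excitation, zent_sub, mul_sub, sum_sub_distrib]

theorem modelIntensity_convexComb (μ : ℝ) {a a' : ℝ} (haa' : a + a' = 1) (z z' : Param N N')
    (t : ℤ) (y : ℤ → Bool) :
    modelIntensity N N' μ (a • z + a' • z') t y
      = a * modelIntensity N N' μ z t y + a' * modelIntensity N N' μ z' t y := by
  simp only [modelIntensity, zent_add, zent_smul, mul_add, sum_add_distrib, mul_left_comm _ a,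
    mul_left_comm _ a', ← mul_sum]
  linear_combination μ * haa'.symm

theorem mem_kIdx {i t : ℤ} :
    (i, t) ∈ kIdx N N' ↔ t ∈ Icc (1 : ℤ) N ∧ i ∈ Icc (t - (N' : ℤ)) (t - 1) := by
  simp only [kIdx, mem_filter, mem_product, mem_Icc]
  omega

theorem norm_sq_eq_sum_zent (v : Param N N') :
    ‖v‖ ^ 2 = ∑ t ∈ Icc (1 : ℤ) N, ∑ i ∈ Icc (t - (N' : ℤ)) (t - 1), zent N N' v i t ^ 2 := by
  rw [EuclideanSpace.real_norm_sq_eq, ← sum_finset_product_right' (kIdx N N') _ _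
    (f := fun i t => zent N N' v i t ^ 2) fun p => mem_kIdx, ← sum_coe_sort (kIdx N N')]
  exact Fintype.sum_congr _ _ fun p => by simp [zent]

/-- On this event (among the times `t - N', …, t`, events exactly at `i` and `t`) the
excitation at `t` picks out the single coefficient `z_{i,t}`. -/
def pairIndicator (N' : ℕ) (i t : ℤ) : (ℤ → Bool) → ℝ :=
  cylinderIndicator (Icc (t - (N' : ℤ)) t) (fun u => decide (u = i ∨ u = t))

theorem prod_pair_ite {i t : ℤ} (hi : i ∈ Icc (t - (N' : ℤ)) (t - 1)) (A C : ℝ) :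
    ∏ u ∈ Icc (t - (N' : ℤ)) t, (if decide (u = i ∨ u = t) then A else C)
      = A ^ 2 * C ^ (N' - 1) := by
  have hi' := mem_Icc.mp hi
  have hpair : (Icc (t - (N' : ℤ)) t).filter (fun u => u = i ∨ u = t) = {i, t} := by
    ext u
    simp only [mem_filter, mem_Icc, mem_insert, mem_singleton]
    omega
  have hcard := (Icc (t - (N' : ℤ)) t).card_filter_add_card_filter_not (fun u => u = i ∨ u = t)
  rw [hpair, card_pair (by omega), Int.card_Icc] at hcard
  simp only [decide_eq_true_eq]
  rw [prod_ite, prod_const, prod_const, hpair, card_pair (by omega)]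
  congr 2
  omega

theorem sum_pairIndicator_mul_sq_le (v : Param N N') (t : ℤ) (y : ℤ → Bool) :
    ∑ i ∈ Icc (t - (N' : ℤ)) (t - 1), pairIndicator N' i t y * zent N N' v i t ^ 2
      ≤ bval (y t) * excitation N N' v t y ^ 2 := by
  by_cases hex : ∃ i ∈ Icc (t - (N' : ℤ)) (t - 1),
      ∀ u ∈ Icc (t - (N' : ℤ)) t, y u = decide (u = i ∨ u = t)
  · obtain ⟨i, hi, hy⟩ := hex
    have hi' := mem_Icc.mp hi
    have hyI : ∀ j ∈ Icc (t - (N' : ℤ)) (t - 1), y j = decide (j = i) := fun j hj => by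
      have hj' := mem_Icc.mp hj
      rw [hy j (mem_Icc.mpr (by omega))]
      simp [show j ≠ t by omega]
    have hyt : y t = true := by simpa using hy t (mem_Icc.mpr (by omega))
    have hind : ∀ j ∈ Icc (t - (N' : ℤ)) (t - 1),
        pairIndicator N' j t y = if j = i then 1 else 0 := by
      intro j hj
      by_cases hji : j = i
      · rw [hji, pairIndicator, cylinderIndicator, if_pos hy, if_pos rfl]
      · rw [if_neg hji, pairIndicator, cylinderIndicator, if_neg fun hy' => ?_]
        have := (hy' i (mem_Icc.mpr (by omega))).symm.trans (hy i (mem_Icc.mpr (by omega)))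
        simp only [true_or, decide_true, decide_eq_true_eq] at this
        omega
    have hexc : excitation N N' v t y = zent N N' v i t := by
      rw [excitation, sum_congr rfl fun j hj => by rw [hyI j hj]]
      simp [bval, hi]
    rw [sum_congr rfl fun j hj => by rw [hind j hj], hexc, hyt]
    simp [bval, hi]
  · rw [sum_eq_zero fun i hi => by
      rw [pairIndicator, cylinderIndicator, if_neg fun hy => hex ⟨i, hi, hy⟩, zero_mul]]
    exact mul_nonneg (by unfold bval; split_ifs <;> norm_num) (sq_nonneg _)

end Kernel

section Likelihood

variable {N N' : ℕ} {h : ℝ} {Λ : ℤ → (ℤ → Bool) → ℝ} {μ b B : ℝ}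

theorem le_expect_pairIndicator (hh : 0 < h) (hb : 0 < b) (hdep : Predictable N N' Λ)
    (hΛ : ∀ t ∈ window N N', ∀ y, b ≤ Λ t y ∧ Λ t y ≤ B)
    {i t : ℤ} (ht : t ∈ Icc (1 : ℤ) N) (hi : i ∈ Icc (t - (N' : ℤ)) (t - 1)) :
    (1 - exp (-(h * b))) ^ 2 * exp (-(h * B)) ^ (N' - 1)
      ≤ expect N N' h Λ (pairIndicator N' i t) := by
  have hwin : Icc (t - (N' : ℤ)) t ⊆ window N N' := by
    intro u hu
    simp only [window, mem_Icc] at hu ht ⊢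
    omega
  rw [← prod_pair_ite hi]
  exact prod_le_expect_cylinderIndicator hh hb hdep hΛ hwin _

def quadStat (N N' : ℕ) (v : Param N N') (y : ℤ → Bool) : ℝ :=
  ∑ t ∈ Icc (1 : ℤ) N, bval (y t) * excitation N N' v t y ^ 2

theorem le_expect_quadStat (hh : 0 < h) (hb : 0 < b) (hdep : Predictable N N' Λ)
    (hΛ : ∀ t ∈ window N N', ∀ y, b ≤ Λ t y ∧ Λ t y ≤ B) (v : Param N N') :
    (1 - exp (-(h * b))) ^ 2 * exp (-(h * B)) ^ (N' - 1) * ‖v‖ ^ 2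
      ≤ expect N N' h Λ (quadStat N N' v) := by
  rw [norm_sq_eq_sum_zent, mul_sum]
  calc _ ≤ ∑ t ∈ Icc (1 : ℤ) N, ∑ i ∈ Icc (t - (N' : ℤ)) (t - 1),
          expect N N' h Λ (pairIndicator N' i t) * zent N N' v i t ^ 2 := by
        refine sum_le_sum fun t ht => ?_
        rw [mul_sum]
        exact sum_le_sum fun i hi => mul_le_mul_of_nonneg_right
          (le_expect_pairIndicator hh hb hdep hΛ ht hi) (sq_nonneg _)
    _ = expect N N' h Λ (fun y => ∑ t ∈ Icc (1 : ℤ) N, ∑ i ∈ Icc (t - (N' : ℤ)) (t - 1),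
          pairIndicator N' i t y * zent N N' v i t ^ 2) := by
        simp only [expect_sum, expect_mul_const]
    _ ≤ expect N N' h Λ (quadStat N N' v) :=
        expect_mono (fun y => (seqPMF_pos hh hb hΛ y).le) fun y =>
          sum_le_sum fun t _ => sum_pairIndicator_mul_sq_le v t y

def logLik (N N' : ℕ) (h μ : ℝ) (z : Param N N') (y : ℤ → Bool) : ℝ :=
  ∑ t ∈ Icc (1 : ℤ) N, bernoulliLogLik (y t) (h * modelIntensity N N' μ z t y)

theorem add_quadStat_le_logLik (hh : 0 < h) (hb : 0 < b) {y : ℤ → Bool} {z z' : Param N N'}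
    (hz : ∀ t ∈ Icc (1 : ℤ) N,
      b ≤ modelIntensity N N' μ z t y ∧ modelIntensity N N' μ z t y ≤ B)
    (hz' : ∀ t ∈ Icc (1 : ℤ) N,
      b ≤ modelIntensity N N' μ z' t y ∧ modelIntensity N N' μ z' t y ≤ B)
    {a a' : ℝ} (ha : 0 ≤ a) (ha' : 0 ≤ a') (haa' : a + a' = 1) :
    a * logLik N N' h μ z y + a' * logLik N N' h μ z' y
        + a * a' * (exp (-(h * B)) / B ^ 2 / 2 * quadStat N N' (z - z') y)
      ≤ logLik N N' h μ (a • z + a' • z') y := by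
  simp only [logLik, quadStat, mul_sum, ← sum_add_distrib]
  refine sum_le_sum fun t ht => ?_
  have hmem {z : Param N N'}
      (hz : b ≤ modelIntensity N N' μ z t y ∧ modelIntensity N N' μ z t y ≤ B) :
      h * modelIntensity N N' μ z t y ∈ Set.Icc (h * b) (h * B) :=
    ⟨mul_le_mul_of_nonneg_left hz.1 hh.le, mul_le_mul_of_nonneg_left hz.2 hh.le⟩
  have hconc := (strongConcaveOn_bernoulliLogLik (y t) (mul_pos hh hb)).2
    (hmem (hz t ht)) (hmem (hz' t ht)) ha ha' haa'
  have hdiff : h * modelIntensity N N' μ z t y - h * modelIntensity N N' μ z' t y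
      = h * excitation N N' (z - z') t y := by
    rw [excitation_sub, modelIntensity, modelIntensity, excitation, excitation]
    ring
  have harg : a * (h * modelIntensity N N' μ z t y) + a' * (h * modelIntensity N N' μ z' t y)
      = h * modelIntensity N N' μ (a • z + a' • z') t y := by
    rw [modelIntensity_convexComb μ haa']
    ring
  have hquad : exp (-(h * B)) / B ^ 2 / 2 * (bval (y t) * excitation N N' (z - z') t y ^ 2)
      = bval (y t) * (exp (-(h * B)) / (h * B) ^ 2) / 2
          * (h * excitation N N' (z - z') t y) ^ 2 := by
    field_simp
  simp only [smul_eq_mul, Real.norm_eq_abs, sq_abs, hdiff, harg] at hconc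
  rwa [hquad]

theorem negLogLik_convexComb_le (hp : ∀ y, 0 ≤ seqPMF N N' h Λ y) (hh : 0 < h) (hb : 0 < b)
    {z z' : Param N N'}
    (hz : ∀ t ∈ Icc (1 : ℤ) N, ∀ y,
      b ≤ modelIntensity N N' μ z t y ∧ modelIntensity N N' μ z t y ≤ B)
    (hz' : ∀ t ∈ Icc (1 : ℤ) N, ∀ y,
      b ≤ modelIntensity N N' μ z' t y ∧ modelIntensity N N' μ z' t y ≤ B)
    {a a' : ℝ} (ha : 0 ≤ a) (ha' : 0 ≤ a') (haa' : a + a' = 1) :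
    negLogLik N N' h Λ μ (a • z + a' • z')
      ≤ a * negLogLik N N' h Λ μ z + a' * negLogLik N N' h Λ μ z'
        - a * a' * (exp (-(h * B)) / B ^ 2 / 2 * expect N N' h Λ (quadStat N N' (z - z'))) := by
  have := expect_mono hp fun y =>
    add_quadStat_le_logLik hh hb (fun t ht => hz t ht y) (fun t ht => hz' t ht y) ha ha' haa'
  simp only [expect_add, expect_const_mul] at this
  change -expect N N' h Λ (logLik N N' h μ _) ≤
    a * -expect N N' h Λ (logLik N N' h μ z) + a' * -expect N N' h Λ (logLik N N' h μ z') - _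
  linarith

end Likelihood

theorem kappa_le_modulus_mul_pairBound {N' : ℕ} (hN' : 1 ≤ N') {h b B : ℝ} (hh : 0 < h)
    (hb : 0 < b) (hbB : b ≤ B) :
    exp (-(2 * h * b)) * (b / B) ^ 2 * h ^ 2 * exp (-(B * ((N' : ℝ) * h)))
      ≤ exp (-(h * B)) / B ^ 2 * ((1 - exp (-(h * b))) ^ 2 * exp (-(h * B)) ^ (N' - 1)) := by
  have hB : 0 < B := hb.trans_le hbB
  have hhb : h * b * exp (-(h * b)) ≤ 1 - exp (-(h * b)) := by
    have := add_one_le_exp (h * b)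
    have hinv : exp (h * b) * exp (-(h * b)) = 1 := by rw [← exp_add, add_neg_cancel, exp_zero]
    nlinarith [exp_pos (-(h * b))]
  have h2hb : exp (-(2 * h * b)) = exp (-(h * b)) ^ 2 := by
    rw [← exp_nat_mul]
    ring_nf
  have hN'hB : exp (-(B * ((N' : ℝ) * h))) = exp (-(h * B)) * exp (-(h * B)) ^ (N' - 1) := by
    rw [← pow_succ', Nat.sub_add_cancel hN', ← exp_nat_mul]
    ring_nf
  rw [h2hb, hN'hB]
  calc _ = (h * b * exp (-(h * b))) ^ 2
          * (exp (-(h * B)) / B ^ 2 * exp (-(h * B)) ^ (N' - 1)) := by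
        field_simp
    _ ≤ (1 - exp (-(h * b))) ^ 2 * (exp (-(h * B)) / B ^ 2 * exp (-(h * B)) ^ (N' - 1)) := by
        gcongr
    _ = _ := by ring

theorem negLogLik_strongly_convex_general
    (N N' : ℕ) (hN' : 1 ≤ N') (h : ℝ) (hh : 0 < h)
    (Λ : ℤ → (ℤ → Bool) → ℝ)
    (hdep : ∀ (t : ℤ) (y y' : ℤ → Bool),
      (∀ i ∈ window N N', i < t → y i = y' i) → Λ t y = Λ t y')
    (μ : ℝ)
    (b B : ℝ) (hb : 0 < b) (hbB : b ≤ B)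
    (hstar : ∀ t ∈ window N N', ∀ y : ℤ → Bool,
      0 < seqPMF N N' h Λ y → b ≤ Λ t y ∧ Λ t y ≤ B)
    (ΘK : Set (Param N N'))
    (hphys : ∀ z ∈ ΘK, ∀ t ∈ Finset.Icc (1 : ℤ) (N : ℤ), ∀ y : ℤ → Bool,
      b ≤ modelIntensity N N' μ z t y ∧ modelIntensity N N' μ z t y ≤ B)
    (κ' : ℝ)
    (hκ' : κ' = Real.exp (-(2 * h * b)) * (b / B) ^ 2 * h ^ 2
        * Real.exp (-(B * ((N' : ℝ) * h)))) :
    ∀ z ∈ ΘK, ∀ z' ∈ ΘK, ∀ a : ℝ, 0 ≤ a → a ≤ 1 →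
      negLogLik N N' h Λ μ (a • z + (1 - a) • z')
        ≤ a * negLogLik N N' h Λ μ z + (1 - a) * negLogLik N N' h Λ μ z'
          - κ' / 2 * (a * (1 - a) * ‖z - z'‖ ^ 2) := by
  intro z hz z' hz' a ha ha1
  have hΛ := intensity_mem_Icc hh hb hdep hstar
  have hconc := negLogLik_convexComb_le (fun y => (seqPMF_pos hh hb hΛ y).le) hh hb
    (hphys z hz) (hphys z' hz') ha (sub_nonneg.mpr ha1) (add_sub_cancel a 1)
  have hquad : κ' * ‖z - z'‖ ^ 2
      ≤ exp (-(h * B)) / B ^ 2 * expect N N' h Λ (quadStat N N' (z - z')) := calc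
    _ ≤ exp (-(h * B)) / B ^ 2 * ((1 - exp (-(h * b))) ^ 2 * exp (-(h * B)) ^ (N' - 1))
          * ‖z - z'‖ ^ 2 := by
        rw [hκ']
        exact mul_le_mul_of_nonneg_right (kappa_le_modulus_mul_pairBound hN' hh hb hbB)
          (sq_nonneg _)
    _ ≤ _ := by
        rw [mul_assoc]
        exact mul_le_mul_of_nonneg_left (le_expect_quadStat hh hb hdep hΛ _) (by positivity)
  linarith [mul_le_mul_of_nonneg_left hquad (mul_nonneg ha (sub_nonneg.mpr ha1))]

/-- strong convexity of the expected negative log-likelihood. -/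
theorem negLogLik_strongly_convex
    (N N' : ℕ) (hN : 1 ≤ N) (hN' : 1 ≤ N') (h : ℝ) (hh : 0 < h)
    (Λ : ℤ → (ℤ → Bool) → ℝ)
    (hdep : ∀ (t : ℤ) (y y' : ℤ → Bool),
      (∀ i ∈ window N N', i < t → y i = y' i) → Λ t y = Λ t y')
    (μ : ℝ) (hμ : 0 < μ)
    (b B : ℝ) (hb : 0 < b) (hbB : b ≤ B)
    (hstar : ∀ t ∈ window N N', ∀ y : ℤ → Bool,
      0 < seqPMF N N' h Λ y → b ≤ Λ t y ∧ Λ t y ≤ B)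
    (ΘK : Set (Param N N')) (hne : ΘK.Nonempty)
    (hcomp : IsCompact ΘK) (hconv : Convex ℝ ΘK)
    (zstar : Param N N') (hzs : zstar ∈ ΘK)
    (htrue : ∀ t ∈ Finset.Icc (1 : ℤ) (N : ℤ), ∀ y : ℤ → Bool,
      Λ t y = modelIntensity N N' μ zstar t y)
    (hphys : ∀ z ∈ ΘK, ∀ t ∈ Finset.Icc (1 : ℤ) (N : ℤ), ∀ y : ℤ → Bool,
      b ≤ modelIntensity N N' μ z t y ∧ modelIntensity N N' μ z t y ≤ B)
    (κ' : ℝ)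
    (hκ' : κ' = Real.exp (-(2 * h * b)) * (b / B) ^ 2 * h ^ 2
        * Real.exp (-(B * ((N' : ℝ) * h)))) :
    ∀ z ∈ ΘK, ∀ z' ∈ ΘK, ∀ a : ℝ, 0 ≤ a → a ≤ 1 →
      negLogLik N N' h Λ μ (a • z + (1 - a) • z')
        ≤ a * negLogLik N N' h Λ μ z + (1 - a) * negLogLik N N' h Λ μ z'
          - κ' / 2 * (a * (1 - a) * ‖z - z'‖ ^ 2) :=
  negLogLik_strongly_convex_general N N' hN' h hh Λ hdep μ b B hb hbB hstar ΘK hphys κ' hκ'
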